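/- Let v be a special point, u ∈ W₀, and D := v + u(C), and suppose C ∩ D = ∅. Then there exists an infinite sequence (A′₀, A′₁, A′₂, …) of alcoves such that A′₀ = A₀, A′ᵢ ⊆ C for all i, A′ᵢ and A′ᵢ₊₁ are adjacent for all i, every finite subsequence (A′ᵢ, …, A′ⱼ) with i ≤ j is a minimal gallery (that is, j − i = d(A′ᵢ, A′ⱼ)), and min{d(A′ᵢ, B) : B an alcove with B ⊆ D} tends to infinity as i → ∞. -/

import Mathlib

open RealInnerProductSpace

/-- A finite, reduced, irreducible, crystallographic root system spanning `V`,
together with a regular vector `ξ` determining the positive system. -/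
structure RootSystemData (V : Type*) [NormedAddCommGroup V] [InnerProductSpace ℝ V] where
  Φ : Set V
  ξ : V
  finite : Φ.Finite
  nonzero : ∀ α ∈ Φ, α ≠ 0
  reduced : ∀ α ∈ Φ, ∀ c : ℝ, c • α ∈ Φ → c = 1 ∨ c = -1
  crystallographic : ∀ α ∈ Φ, ∀ β ∈ Φ, ∃ n : ℤ, 2 * ⟪β, α⟫ / ⟪α, α⟫ = (n : ℝ)
  reflect_mem : ∀ α ∈ Φ, ∀ β ∈ Φ, β - (2 * ⟪β, α⟫ / ⟪α, α⟫) • α ∈ Φ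
  spans : Submodule.span ℝ Φ = ⊤
  irreducible : ∀ Φ₁ Φ₂ : Set V, Φ = Φ₁ ∪ Φ₂ →
    (∀ a ∈ Φ₁, ∀ b ∈ Φ₂, ⟪a, b⟫ = (0 : ℝ)) → Φ₁ = ∅ ∨ Φ₂ = ∅
  regular : ∀ α ∈ Φ, ⟪ξ, α⟫ ≠ (0 : ℝ)

/-- The affine orthogonal reflection of `V` fixing the hyperplane `{x | ⟪x, α⟫ = k}` pointwise. -/
noncomputable def reflPt {V : Type*} [NormedAddCommGroup V] [InnerProductSpace ℝ V]
    (α : V) (k : ℝ) (x : V) : V := x - ((⟪x, α⟫ - k) * (2 / ⟪α, α⟫)) • α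

namespace RootSystemData

variable {V : Type*} [NormedAddCommGroup V] [InnerProductSpace ℝ V]

/-- The positive system `Φ⁺` determined by `ξ`. -/
def pos (R : RootSystemData V) : Set V := {α | α ∈ R.Φ ∧ 0 < ⟪R.ξ, α⟫}

/-- The open dominant Weyl chamber `C`. -/
def chamber (R : RootSystemData V) : Set V := {x | ∀ α ∈ R.pos, 0 < ⟪x, α⟫}

/-- The opposite chamber `−C`. -/
def antiChamber (R : RootSystemData V) : Set V := {x | -x ∈ R.chamber}

/-- The affine root hyperplane `H_{α,k}`. -/
def hyp (R : RootSystemData V) (α : V) (k : ℤ) : Set V := {x | ⟪x, α⟫ = (k : ℝ)}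

/-- `H` is an affine root hyperplane. -/
def IsHyp (R : RootSystemData V) (H : Set V) : Prop := ∃ α ∈ R.Φ, ∃ k : ℤ, H = R.hyp α k

/-- The union of all affine root hyperplanes. -/
def hypUnion (R : RootSystemData V) : Set V := {x | ∃ α ∈ R.Φ, ∃ k : ℤ, ⟪x, α⟫ = (k : ℝ)}

/-- An alcove: a connected component of the complement of the union of the affine root
hyperplanes. -/
def IsAlcove (R : RootSystemData V) (A : Set V) : Prop :=
  ∃ x ∈ R.hypUnionᶜ, A = connectedComponentIn R.hypUnionᶜ x

/-- The base alcove `A₀`. -/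
def baseAlcove (R : RootSystemData V) : Set V :=
  {x | ∀ α ∈ R.pos, 0 < ⟪x, α⟫ ∧ ⟪x, α⟫ < 1}

/-- The sets `A` and `B` lie in the same open half-space determined by the affine root
hyperplane `H`. -/
def SameSide (R : RootSystemData V) (H A B : Set V) : Prop :=
  ∃ α ∈ R.Φ, ∃ k : ℤ, H = R.hyp α k ∧
    ((∀ x ∈ A ∪ B, ⟪x, α⟫ < (k : ℝ)) ∨ (∀ x ∈ A ∪ B, (k : ℝ) < ⟪x, α⟫))

/-- The affine root hyperplane `H` separates `A` and `B`: they lie in the two different open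
half-spaces determined by `H`. -/
def Separates (R : RootSystemData V) (H A B : Set V) : Prop :=
  ∃ α ∈ R.Φ, ∃ k : ℤ, H = R.hyp α k ∧
    (((∀ x ∈ A, ⟪x, α⟫ < (k : ℝ)) ∧ (∀ x ∈ B, (k : ℝ) < ⟪x, α⟫)) ∨
     ((∀ x ∈ B, ⟪x, α⟫ < (k : ℝ)) ∧ (∀ x ∈ A, (k : ℝ) < ⟪x, α⟫)))

/-- `d(A, B)`: the number of affine root hyperplanes separating `A` from `B`. -/
noncomputable def dist (R : RootSystemData V) (A B : Set V) : ℕ :=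
  {H : Set V | R.IsHyp H ∧ R.Separates H A B}.ncard

/-- Two alcoves are adjacent. -/
def Adjacent (R : RootSystemData V) (A B : Set V) : Prop := A ≠ B ∧ R.dist A B = 1

/-- `H` is a wall of the alcove `A`: it is an affine root hyperplane with
`d(A, r_H(A)) = 1`. -/
def IsWall (R : RootSystemData V) (H A : Set V) : Prop :=
  ∃ α ∈ R.Φ, ∃ k : ℤ, H = R.hyp α k ∧ R.dist A (reflPt α (k : ℝ) '' A) = 1

/-- `H` is a wall of the dominant chamber `C`: `H ∩ C = ∅` and `H ∩ closure C` affinely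
spans `H`. -/
def IsChamberWall (R : RootSystemData V) (H : Set V) : Prop :=
  R.IsHyp H ∧ H ∩ R.chamber = ∅ ∧ affineSpan ℝ (H ∩ closure R.chamber) = affineSpan ℝ H

/-- A special point of `V`. -/
def IsSpecial (R : RootSystemData V) (v : V) : Prop := ∀ α ∈ R.Φ, ∃ n : ℤ, ⟪v, α⟫ = (n : ℝ)

/-- The finite Weyl group `W₀`: the group of linear isometries of `V` generated by the
reflections in the hyperplanes `H_{α,0}`, `α ∈ Φ`. -/
def W0 (R : RootSystemData V) : Subgroup (V ≃ₗᵢ[ℝ] V) :=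
  Subgroup.closure {f | ∃ α ∈ R.Φ, ∀ x, f x = reflPt α 0 x}

/-- A finite gallery `(Bs 0, …, Bs n)`: consecutive alcoves are adjacent. -/
def IsGallery (R : RootSystemData V) (Bs : ℕ → Set V) (n : ℕ) : Prop :=
  (∀ i ≤ n, R.IsAlcove (Bs i)) ∧ ∀ i < n, R.Adjacent (Bs i) (Bs (i + 1))

/-- The Umbrella property for a gallery `(Bs 0, …, Bs n)`, an alcove `A` and a wall `H`
of `A`: every alcove of the gallery is on the same side of `H` as `A`, and the gallery can
be extended to a minimal gallery from `Bs 0` to `A`. -/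
def Umbrella (R : RootSystemData V) (Bs : ℕ → Set V) (n : ℕ) (A H : Set V) : Prop :=
  R.IsWall H A ∧ (∀ i ≤ n, R.SameSide H (Bs i) A) ∧
    ∃ m, n ≤ m ∧ ∃ Cs : ℕ → Set V, (∀ i ≤ n, Cs i = Bs i) ∧ Cs m = A ∧
      R.IsGallery Cs m ∧ R.dist (Cs 0) (Cs m) = m

/-- The length of an invertible affine transformation: `ℓ(g) = d(A₀, g(A₀))`. -/
noncomputable def len (R : RootSystemData V) (g : V ≃ᵃ[ℝ] V) : ℕ :=
  R.dist R.baseAlcove (⇑g '' R.baseAlcove)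

/-- `g` is a translation of `V`. -/
def IsTranslation (g : V ≃ᵃ[ℝ] V) : Prop := ∃ v : V, ∀ x, g x = x + v

/-- `s ∈ S_aff`: `s` is the reflection in an affine root hyperplane which is a wall of the
base alcove `A₀`. -/
def IsSimpleRefl (R : RootSystemData V) (s : V ≃ᵃ[ℝ] V) : Prop :=
  ∃ α ∈ R.Φ, ∃ k : ℤ, R.IsWall (R.hyp α k) R.baseAlcove ∧ ∀ x, s x = reflPt α (k : ℝ) x

end RootSystemData

/-- The sequence of iterated conjugates `g, s₁gs₁, s₂s₁gs₁s₂, …`. -/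
noncomputable def conjSeq {V : Type*} [NormedAddCommGroup V] [InnerProductSpace ℝ V]
    (g : V ≃ᵃ[ℝ] V) (ss : ℕ → V ≃ᵃ[ℝ] V) : ℕ → V ≃ᵃ[ℝ] V
  | 0 => g
  | n + 1 => ss n * conjSeq g ss n * ss n

namespace RootSystemData

variable {V : Type*} [NormedAddCommGroup V] [InnerProductSpace ℝ V]

/-- The Diamond Property for `g`: a sequence of length-preserving conjugations by simple
reflections leads to an element `g′` admitting a simple reflection `s` with
`ℓ(sg′) > ℓ(g′)`, `ℓ(g′s) > ℓ(g′)` and `sg′s ≠ g′`. -/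
def DiamondProperty (R : RootSystemData V) (g : V ≃ᵃ[ℝ] V) : Prop :=
  ∃ (n : ℕ) (ss : ℕ → V ≃ᵃ[ℝ] V), (∀ i < n, R.IsSimpleRefl (ss i)) ∧
    (∀ i < n, R.len (conjSeq g ss (i + 1)) = R.len g) ∧
    ∃ s : V ≃ᵃ[ℝ] V, R.IsSimpleRefl s ∧
      R.len (s * conjSeq g ss n) > R.len (conjSeq g ss n) ∧
      R.len (conjSeq g ss n * s) > R.len (conjSeq g ss n) ∧
      s * conjSeq g ss n * s ≠ conjSeq g ss n

end RootSystemData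


/-!
Alcoves are the nonempty boxes `{y | f α < ⟪y, α⟫ < f α + 1 for all α ∈ Φ⁺}` labelled by integer
vectors `f`, and the distance between two of them is `∑_{α ∈ Φ⁺} |f α - g α|`. Follow the ray
`x + t • ξ` from a point `x ∈ A₀` chosen, by Baire's theorem, off the countably many hyperplanes
of points whose ray meets two hyperplanes `H_{α,k}`, `H_{β,m}` with `α ≠ β` simultaneously. The
ray then crosses one hyperplane at a time, each crossing raising a single label by one, so the
labels only grow and the alcoves met by the ray form an infinite minimal gallery in `C`. All
labels tend to infinity along the ray, whereas an alcove of `D` lies outside `C` and so has a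
negative label; hence its distance to the gallery tends to infinity.
-/

open Filter

theorem dense_setOf_inner_ne {V : Type*} [NormedAddCommGroup V] [InnerProductSpace ℝ V]
    {ζ : V} (hζ : ζ ≠ 0) (c : ℝ) : Dense {x : V | ⟪ζ, x⟫ ≠ c} := by
  have hne : innerSL ℝ ζ ≠ 0 := fun h => hζ (norm_eq_zero.1 (by
    rw [← innerSL_apply_norm (𝕜 := ℝ), h, norm_zero]))
  exact (dense_compl_singleton c).preimage ((innerSL ℝ ζ).isOpenMap_of_ne_zero hne)

theorem IsOpen.exists_mem_forall_inner_ne {V : Type*} [NormedAddCommGroup V]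
    [InnerProductSpace ℝ V] [CompleteSpace V] {ι : Type*} [Countable ι] {U : Set V}
    (hU : IsOpen U) (hne : U.Nonempty) {ζ : ι → V} (hζ : ∀ i, ζ i ≠ 0) (c : ι → ℝ) :
    ∃ x ∈ U, ∀ i, ⟪ζ i, x⟫ ≠ c i := by
  have hd : Dense (⋂ i, {x : V | ⟪ζ i, x⟫ ≠ c i}) :=
    dense_iInter_of_isOpen (fun i => isOpen_ne_fun (continuous_const.inner continuous_id)
      continuous_const) fun i => dense_setOf_inner_ne (hζ i) (c i)
  obtain ⟨x, hxU, hxd⟩ := hd.inter_open_nonempty U hU hne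
  exact ⟨x, hxU, Set.mem_iInter.1 hxd⟩

theorem exists_seq_of_forall_exists {α : Type*} {P : α → Prop} {r : α → α → Prop}
    (h : ∀ a, P a → ∃ b, P b ∧ r a b) {a₀ : α} (h₀ : P a₀) :
    ∃ s : ℕ → α, s 0 = a₀ ∧ ∀ n, P (s n) ∧ r (s n) (s (n + 1)) := by
  choose g hg using fun a : {a // P a} => h a.1 a.2
  let s : ℕ → {a // P a} := fun n => Nat.rec ⟨a₀, h₀⟩ (fun _ a => ⟨g a, (hg a).1⟩) n
  exact ⟨fun n => (s n).1, rfl, fun n => ⟨(s n).2, (hg (s n)).2⟩⟩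

namespace RootSystemData

variable {V : Type*} [NormedAddCommGroup V] [InnerProductSpace ℝ V] (R : RootSystemData V)

theorem pos_finite : R.pos.Finite := R.finite.subset fun _ h => h.1

variable {R}

theorem neg_mem {α : V} (hα : α ∈ R.Φ) : -α ∈ R.Φ := by
  have h := R.reflect_mem α hα α hα
  rwa [mul_div_assoc, div_self (inner_self_ne_zero.2 (R.nonzero α hα)), mul_one, two_smul,
    sub_add_cancel_left] at h

theorem mem_pos_or_neg_mem_pos {α : V} (hα : α ∈ R.Φ) : α ∈ R.pos ∨ -α ∈ R.pos := by
  rcases (R.regular α hα).lt_or_gt with h | h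
  · exact Or.inr ⟨neg_mem hα, by rwa [inner_neg_right, neg_pos]⟩
  · exact Or.inl ⟨hα, h⟩

theorem eq_one_of_smul_mem_pos {α : V} {c : ℝ} (hα : α ∈ R.pos) (hc : c • α ∈ R.pos) :
    c = 1 := by
  refine (R.reduced α hα.1 c hc.1).resolve_right fun h => ?_
  have := hc.2
  rw [h, neg_one_smul, inner_neg_right] at this
  linarith [hα.2]

theorem hyp_inj {α β : V} {k m : ℤ} (hα : α ∈ R.pos) (hβ : β ∈ R.pos)
    (h : R.hyp α k = R.hyp β m) : α = β ∧ k = m := by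
  have hαα : ⟪α, α⟫ ≠ 0 := inner_self_ne_zero.2 (R.nonzero α hα.1)
  have hmem : ∀ x : V, ⟪x, α⟫ = k → ⟪x, β⟫ = m := fun x hx => by
    change x ∈ R.hyp β m; rw [← h]; exact hx
  set x₀ : V := ((k : ℝ) / ⟪α, α⟫) • α
  have hx₀ : ⟪x₀, α⟫ = k := by rw [real_inner_smul_left, div_mul_cancel₀ _ hαα]
  -- `y` is the component of `β` orthogonal to `α`; moving along it stays in `H_{α,k}`.
  set y : V := β - (⟪β, α⟫ / ⟪α, α⟫) • α
  have hyα : ⟪y, α⟫ = 0 := by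
    rw [inner_sub_left, real_inner_smul_left, div_mul_cancel₀ _ hαα, sub_self]
  have hyβ : ⟪y, β⟫ = 0 := by
    have h1 := hmem x₀ hx₀
    have h2 := hmem (x₀ + y) (by rw [inner_add_left, hx₀, hyα, add_zero])
    rw [inner_add_left, h1] at h2
    linarith
  have hy : y = 0 := by
    refine inner_self_eq_zero.1 (?_ : ⟪y, β - (⟪β, α⟫ / ⟪α, α⟫) • α⟫ = 0)
    rw [inner_sub_right, real_inner_smul_right, hyβ, hyα, mul_zero, sub_zero]
  have hβα : β = (⟪β, α⟫ / ⟪α, α⟫) • α := sub_eq_zero.1 hy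
  have hc := eq_one_of_smul_mem_pos hα (hβα ▸ hβ)
  rw [hc, one_smul] at hβα
  subst hβα
  exact ⟨rfl, by exact_mod_cast hx₀.symm.trans (hmem x₀ hx₀)⟩

theorem hyp_neg (α : V) (k : ℤ) : R.hyp (-α) (-k) = R.hyp α k := by
  ext x
  simp only [hyp, Set.mem_ofPred_eq, inner_neg_right, Int.cast_neg, neg_inj]

variable (R) in
def box (f : V → ℤ) : Set V := {y | ∀ α ∈ R.pos, (f α : ℝ) < ⟪y, α⟫ ∧ ⟪y, α⟫ < f α + 1}

noncomputable def floorInner (x : V) : V → ℤ := fun α => ⌊⟪x, α⟫⌋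

theorem box_congr {f g : V → ℤ} (h : ∀ α ∈ R.pos, f α = g α) : R.box f = R.box g := by
  ext y
  exact forall₂_congr fun α hα => by rw [h α hα]

theorem box_zero : R.box 0 = R.baseAlcove := by
  ext y
  simp [box, baseAlcove]

theorem box_eq_biInter (f : V → ℤ) :
    R.box f = ⋂ α ∈ R.pos, (innerSL ℝ α) ⁻¹' Set.Ioo (f α : ℝ) (f α + 1) := by
  ext y
  simp [box, real_inner_comm]

theorem isOpen_box (f : V → ℤ) : IsOpen (R.box f) := by
  rw [box_eq_biInter]
  exact R.pos_finite.isOpen_biInter fun α _ => isOpen_Ioo.preimage (innerSL ℝ α).continuous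

theorem convex_box (f : V → ℤ) : Convex ℝ (R.box f) := by
  rw [box_eq_biInter]
  exact convex_iInter₂ fun α _ => (convex_Ioo _ _).linear_preimage (innerSL ℝ α).toLinearMap

theorem box_subset_compl_hypUnion (f : V → ℤ) : R.box f ⊆ R.hypUnionᶜ := by
  rintro y hy ⟨α, hα, k, hk⟩
  rcases mem_pos_or_neg_mem_pos hα with hα' | hα'
  · obtain ⟨h1, h2⟩ := hy α hα'
    rw [hk] at h1 h2
    have : f α < k ∧ k < f α + 1 := ⟨by exact_mod_cast h1, by exact_mod_cast h2⟩
    omega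
  · obtain ⟨h1, h2⟩ := hy (-α) hα'
    rw [inner_neg_right, hk, ← Int.cast_neg] at h1 h2
    have : f (-α) < -k ∧ -k < f (-α) + 1 := ⟨by exact_mod_cast h1, by exact_mod_cast h2⟩
    omega

theorem box_subset_chamber {f : V → ℤ} (hf : ∀ α ∈ R.pos, 0 ≤ f α) : R.box f ⊆ R.chamber :=
  fun y hy α hα => lt_of_le_of_lt (by exact_mod_cast hf α hα) (hy α hα).1

theorem mem_box_floorInner {x : V} (hx : x ∈ R.hypUnionᶜ) : x ∈ R.box (floorInner x) :=
  fun α hα => ⟨(Int.floor_le _).lt_of_ne fun h => hx ⟨α, hα.1, _, h.symm⟩, Int.lt_floor_add_one _⟩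

theorem floorInner_eq_of_mem_box {f : V → ℤ} {y : V} (hy : y ∈ R.box f) {α : V}
    (hα : α ∈ R.pos) : floorInner y α = f α :=
  Int.floor_eq_iff.2 ⟨(hy α hα).1.le, (hy α hα).2⟩

theorem box_floorInner_of_mem_box {f : V → ℤ} {y : V} (hy : y ∈ R.box f) :
    R.box (floorInner y) = R.box f :=
  box_congr fun _ hα => floorInner_eq_of_mem_box hy hα

theorem floorInner_eq_of_mem_connectedComponentIn {x y : V}
    (hy : y ∈ connectedComponentIn R.hypUnionᶜ x) {α : V} (hα : α ∈ R.Φ) :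
    floorInner y α = floorInner x α := by
  have hx : x ∈ connectedComponentIn R.hypUnionᶜ x :=
    mem_connectedComponentIn (connectedComponentIn_nonempty_iff.1 ⟨y, hy⟩)
  have hS : IsPreconnected ((fun z => ⟪z, α⟫) '' connectedComponentIn R.hypUnionᶜ x) :=
    isPreconnected_connectedComponentIn.image _ (continuous_id.inner continuous_const).continuousOn
  have key : ∀ {a b}, a ∈ connectedComponentIn R.hypUnionᶜ x →
      b ∈ connectedComponentIn R.hypUnionᶜ x → floorInner a α ≤ floorInner b α := by
    intro a b ha hb
    by_contra! hlt
    obtain ⟨z, hz, hzk⟩ := hS.Icc_subset (Set.mem_image_of_mem _ hb) (Set.mem_image_of_mem _ ha)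
      ⟨(Int.floor_lt.1 hlt).le, Int.floor_le _⟩
    exact connectedComponentIn_subset _ _ hz ⟨α, hα, _, hzk⟩
  exact le_antisymm (key hy hx) (key hx hy)

theorem connectedComponentIn_eq_box {x : V} (hx : x ∈ R.hypUnionᶜ) :
    connectedComponentIn R.hypUnionᶜ x = R.box (floorInner x) := by
  refine subset_antisymm (fun y hy => ?_) ((convex_box _).isPreconnected.subset_connectedComponentIn
    (mem_box_floorInner hx) (box_subset_compl_hypUnion _))
  rw [← box_congr fun α hα => floorInner_eq_of_mem_connectedComponentIn hy hα.1]
  exact mem_box_floorInner (connectedComponentIn_subset _ _ hy)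

theorem isAlcove_box {f : V → ℤ} (hf : (R.box f).Nonempty) : R.IsAlcove (R.box f) := by
  obtain ⟨y, hy⟩ := hf
  have hyc := box_subset_compl_hypUnion f hy
  exact ⟨y, hyc, by rw [connectedComponentIn_eq_box hyc, box_floorInner_of_mem_box hy]⟩

theorem IsAlcove.exists_eq_box {B : Set V} (hB : R.IsAlcove B) :
    ∃ x ∈ B, B = R.box (floorInner x) := by
  obtain ⟨x, hx, rfl⟩ := hB
  exact ⟨x, mem_connectedComponentIn hx, connectedComponentIn_eq_box hx⟩

theorem separates_iff_exists_pos {H A B : Set V} :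
    R.Separates H A B ↔ ∃ α ∈ R.pos, ∃ k : ℤ, H = R.hyp α k ∧
      (((∀ x ∈ A, ⟪x, α⟫ < k) ∧ (∀ x ∈ B, k < ⟪x, α⟫)) ∨
       ((∀ x ∈ B, ⟪x, α⟫ < k) ∧ (∀ x ∈ A, k < ⟪x, α⟫))) := by
  refine ⟨fun ⟨α, hα, k, hH, hs⟩ => ?_, fun ⟨α, hα, k, hH, hs⟩ => ⟨α, hα.1, k, hH, hs⟩⟩
  rcases mem_pos_or_neg_mem_pos hα with hα' | hα'
  · exact ⟨α, hα', k, hH, hs⟩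
  · refine ⟨-α, hα', -k, hH.trans (hyp_neg α k).symm, ?_⟩
    simp only [inner_neg_right, Int.cast_neg, neg_lt_neg_iff]
    tauto

theorem forall_mem_box_inner_lt_iff {f : V → ℤ} (hf : (R.box f).Nonempty) {α : V}
    (hα : α ∈ R.pos) (k : ℤ) : (∀ x ∈ R.box f, ⟪x, α⟫ < k) ↔ f α < k := by
  refine ⟨fun h => ?_, fun h x hx => (hx α hα).2.trans_le (by exact_mod_cast h)⟩
  obtain ⟨x, hx⟩ := hf
  exact_mod_cast (hx α hα).1.trans (h x hx)

theorem forall_mem_box_lt_inner_iff {f : V → ℤ} (hf : (R.box f).Nonempty) {α : V}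
    (hα : α ∈ R.pos) (k : ℤ) : (∀ x ∈ R.box f, k < ⟪x, α⟫) ↔ k ≤ f α := by
  refine ⟨fun h => ?_, fun h x hx => lt_of_le_of_lt (by exact_mod_cast h) (hx α hα).1⟩
  obtain ⟨x, hx⟩ := hf
  exact Int.lt_add_one_iff.1 (by exact_mod_cast (h x hx).trans (hx α hα).2)

theorem setOf_separates_box {f g : V → ℤ} (hf : (R.box f).Nonempty) (hg : (R.box g).Nonempty) :
    {H | R.IsHyp H ∧ R.Separates H (R.box f) (R.box g)} =
      (fun p : (_ : V) × ℤ => R.hyp p.1 p.2) ''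
        ↑(R.pos_finite.toFinset.sigma fun α => Finset.Ioc (min (f α) (g α)) (max (f α) (g α))) := by
  ext H
  simp only [Set.mem_ofPred_eq, Set.mem_image, Finset.mem_coe, Finset.mem_sigma,
    Set.Finite.mem_toFinset, Finset.mem_Ioc, Sigma.exists, separates_iff_exists_pos]
  constructor
  · rintro ⟨-, α, hα, k, rfl, hs⟩
    rw [forall_mem_box_inner_lt_iff hf hα, forall_mem_box_inner_lt_iff hg hα,
      forall_mem_box_lt_inner_iff hf hα, forall_mem_box_lt_inner_iff hg hα] at hs
    exact ⟨α, k, ⟨hα, by omega⟩, rfl⟩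
  · rintro ⟨α, k, ⟨hα, hk⟩, rfl⟩
    refine ⟨⟨α, hα.1, k, rfl⟩, α, hα, k, rfl, ?_⟩
    rw [forall_mem_box_inner_lt_iff hf hα, forall_mem_box_inner_lt_iff hg hα,
      forall_mem_box_lt_inner_iff hf hα, forall_mem_box_lt_inner_iff hg hα]
    omega

theorem dist_box {f g : V → ℤ} (hf : (R.box f).Nonempty) (hg : (R.box g).Nonempty) :
    R.dist (R.box f) (R.box g) = ∑ α ∈ R.pos_finite.toFinset, (f α - g α).natAbs := by
  have hinj : Set.InjOn (fun p : (_ : V) × ℤ => R.hyp p.1 p.2) {p | p.1 ∈ R.pos} := by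
    rintro ⟨α, k⟩ hα ⟨β, m⟩ hβ h
    obtain ⟨rfl, rfl⟩ := hyp_inj hα hβ h
    rfl
  rw [dist, setOf_separates_box hf hg, (hinj.mono fun p hp => ?_).ncard_image,
    Set.ncard_coe_finset, Finset.card_sigma]
  · refine Finset.sum_congr rfl fun α _ => ?_
    rw [Int.card_Ioc]
    omega
  · simpa using (Finset.mem_sigma.1 hp).1

variable (R) in
/-- The time at which the ray `t ↦ x + t • ξ` meets `{y | ⟪y, α⟫ = c}`. -/
noncomputable def hitTime (x α : V) (c : ℝ) : ℝ := (c - ⟪x, α⟫) / ⟪R.ξ, α⟫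

variable (R) in
def IsGenericRay (x : V) : Prop :=
  ∀ α ∈ R.pos, ∀ β ∈ R.pos, α ≠ β → ∀ k m : ℤ, R.hitTime x α k ≠ R.hitTime x β m

theorem inner_ray (x α : V) (t : ℝ) : ⟪x + t • R.ξ, α⟫ = ⟪x, α⟫ + t * ⟪R.ξ, α⟫ := by
  rw [inner_add_left, real_inner_smul_left]

theorem inner_ray_lt_iff {x α : V} (hα : α ∈ R.pos) {t c : ℝ} :
    ⟪x + t • R.ξ, α⟫ < c ↔ t < R.hitTime x α c := by
  rw [hitTime, lt_div_iff₀ hα.2, inner_ray]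
  constructor <;> intro h <;> linarith

theorem lt_inner_ray_iff {x α : V} (hα : α ∈ R.pos) {t c : ℝ} :
    c < ⟪x + t • R.ξ, α⟫ ↔ R.hitTime x α c < t := by
  rw [hitTime, div_lt_iff₀ hα.2, inner_ray]
  constructor <;> intro h <;> linarith

theorem hitTime_lt_hitTime {x α : V} (hα : α ∈ R.pos) {c d : ℝ} (h : c < d) :
    R.hitTime x α c < R.hitTime x α d :=
  div_lt_div_of_pos_right (by linarith) hα.2

theorem ray_mem_box_iff {x : V} {t : ℝ} {f : V → ℤ} :
    x + t • R.ξ ∈ R.box f ↔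
      ∀ α ∈ R.pos, R.hitTime x α (f α) < t ∧ t < R.hitTime x α (f α + 1) :=
  forall₂_congr fun _ hα => and_congr (lt_inner_ray_iff hα) (inner_ray_lt_iff hα)

theorem hitTime_eq_hitTime_iff {x α β : V} (hα : α ∈ R.pos) (hβ : β ∈ R.pos) {c d : ℝ} :
    R.hitTime x α c = R.hitTime x β d ↔
      ⟪⟪R.ξ, β⟫ • α - ⟪R.ξ, α⟫ • β, x⟫ = c * ⟪R.ξ, β⟫ - d * ⟪R.ξ, α⟫ := by
  rw [hitTime, hitTime, div_eq_div_iff hα.2.ne' hβ.2.ne', inner_sub_left, real_inner_smul_left,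
    real_inner_smul_left, real_inner_comm α x, real_inner_comm β x]
  constructor <;> intro h <;> linear_combination -h

theorem smul_sub_smul_ne_zero {α β : V} (hα : α ∈ R.pos) (hβ : β ∈ R.pos) (hne : α ≠ β) :
    ⟪R.ξ, β⟫ • α - ⟪R.ξ, α⟫ • β ≠ 0 := by
  intro h
  have hβα : β = (⟪R.ξ, β⟫ / ⟪R.ξ, α⟫) • α := by
    rw [div_eq_inv_mul, mul_smul, sub_eq_zero.1 h, inv_smul_smul₀ hα.2.ne']
  have hc := eq_one_of_smul_mem_pos hα (hβα ▸ hβ : (⟪R.ξ, β⟫ / ⟪R.ξ, α⟫) • α ∈ R.pos)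
  rw [hc, one_smul] at hβα
  exact hne hβα.symm

theorem exists_isGenericRay_mem [CompleteSpace V] {U : Set V} (hU : IsOpen U)
    (hne : U.Nonempty) : ∃ x ∈ U, R.IsGenericRay x := by
  have : Finite R.pos := R.pos_finite.to_subtype
  obtain ⟨x, hxU, hx⟩ := hU.exists_mem_forall_inner_ne
    (ι := {p : R.pos × R.pos // p.1 ≠ p.2} × ℤ × ℤ) hne
    (fun i => smul_sub_smul_ne_zero i.1.1.1.2 i.1.1.2.2 (Subtype.coe_injective.ne i.1.2))
    (fun i => i.2.1 * ⟪R.ξ, i.1.1.2⟫ - i.2.2 * ⟪R.ξ, i.1.1.1⟫)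
  refine ⟨x, hxU, fun α hα β hβ hne k m h => hx ⟨⟨⟨⟨α, hα⟩, ⟨β, hβ⟩⟩, ?_⟩, k, m⟩ ?_⟩
  · simpa using hne
  · exact (hitTime_eq_hitTime_iff hα hβ).1 h

theorem baseAlcove_nonempty : R.baseAlcove.Nonempty := by
  obtain ⟨t, ht0, ht⟩ := Set.Finite.exists_between' (Set.finite_singleton (0 : ℝ))
    (R.pos_finite.image fun α => R.hitTime (0 : V) α 1)
    (by rintro _ rfl _ ⟨α, hα, rfl⟩; simpa [hitTime] using hα.2)
  refine ⟨(0 : V) + t • R.ξ, ?_⟩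
  rw [← box_zero]
  refine ray_mem_box_iff.2 fun α hα => ⟨?_, ?_⟩
  · simpa [hitTime] using ht0 0 rfl
  · simpa using ht _ ⟨α, hα, rfl⟩

theorem exists_ray_mem_box_add_single [DecidableEq V] (hP : R.pos.Nonempty) {x : V}
    (hx : R.IsGenericRay x) {t : ℝ} {f : V → ℤ} (ht : x + t • R.ξ ∈ R.box f) :
    ∃ t' : ℝ, ∃ γ ∈ R.pos, x + t' • R.ξ ∈ R.box (f + Pi.single γ 1) := by
  rw [ray_mem_box_iff] at ht
  -- `γ` is the positive root whose next hyperplane the ray meets first after time `t`;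
  -- genericity makes it unique, so the ray then crosses no other hyperplane for a while.
  obtain ⟨γ, hγ, hmin⟩ :=
    R.pos.exists_min_image (fun α => R.hitTime x α (f α + 1)) R.pos_finite hP
  have hfirst : ∀ α ∈ R.pos, α ≠ γ → R.hitTime x γ (f γ + 1) < R.hitTime x α (f α + 1) :=
    fun α hα hne => (hmin α hα).lt_of_ne (by exact_mod_cast hx γ hγ α hα hne.symm _ _)
  obtain ⟨t', ht'lo, ht'hi⟩ := Set.Finite.exists_between' (Set.finite_singleton _)
    (R.pos_finite.image fun α => R.hitTime x α ((f + Pi.single γ (1 : ℤ) : V → ℤ) α + 1)) (by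
      rintro _ rfl _ ⟨α, hα, rfl⟩
      by_cases hαγ : α = γ
      · subst hαγ
        simpa using hitTime_lt_hitTime hα (lt_add_one _)
      · simpa [Pi.single_eq_of_ne hαγ] using hfirst α hα hαγ)
  refine ⟨t', γ, hγ, ray_mem_box_iff.2 fun α hα => ⟨?_, ht'hi _ ⟨α, hα, rfl⟩⟩⟩
  by_cases hαγ : α = γ
  · subst hαγ
    simpa using ht'lo _ rfl
  · simpa [Pi.single_eq_of_ne hαγ] using
      ((ht α hα).1.trans (ht γ hγ).2).trans (ht'lo _ rfl)

variable (R) in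
structure IsRayWalk [DecidableEq V] (x : V) (s : ℕ → ℝ) (f : ℕ → V → ℤ) : Prop where
  zero : f 0 = 0
  mem_box : ∀ i, x + s i • R.ξ ∈ R.box (f i)
  succ : ∀ i, ∃ γ ∈ R.pos, f (i + 1) = f i + Pi.single γ 1

theorem exists_isRayWalk [DecidableEq V] (hP : R.pos.Nonempty) {x : V}
    (hx : R.IsGenericRay x) (hx₀ : x ∈ R.baseAlcove) : ∃ s f, R.IsRayWalk x s f := by
  obtain ⟨p, hp0, hp⟩ := exists_seq_of_forall_exists
    (P := fun p : ℝ × (V → ℤ) => x + p.1 • R.ξ ∈ R.box p.2)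
    (r := fun p q => ∃ γ ∈ R.pos, q.2 = p.2 + Pi.single γ 1)
    (fun p hp => let ⟨t', γ, hγ, h⟩ := exists_ray_mem_box_add_single hP hx hp
      ⟨(t', _), h, γ, hγ, rfl⟩)
    (a₀ := (0, 0)) (by simpa [box_zero] using hx₀)
  exact ⟨fun i => (p i).1, fun i => (p i).2, by rw [hp0], fun i => (hp i).1, fun i => (hp i).2⟩

namespace IsRayWalk

variable [DecidableEq V] {x : V} {s : ℕ → ℝ} {f : ℕ → V → ℤ}

theorem monotone (hw : R.IsRayWalk x s f) (α : V) : Monotone fun i => f i α :=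
  monotone_nat_of_le_succ fun i => by
    obtain ⟨γ, -, h⟩ := hw.succ i
    rw [h, Pi.add_apply, le_add_iff_nonneg_right]
    exact (Pi.single_nonneg.2 zero_le_one : (0 : V → ℤ) ≤ Pi.single γ 1) α

theorem nonneg (hw : R.IsRayWalk x s f) (i : ℕ) (α : V) : 0 ≤ f i α := by
  simpa [hw.zero] using hw.monotone α (Nat.zero_le i)

theorem sum_eq (hw : R.IsRayWalk x s f) (i : ℕ) : ∑ α ∈ R.pos_finite.toFinset, f i α = i := by
  induction i with
  | zero => simp [hw.zero]
  | succ i ih =>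
    obtain ⟨γ, hγ, h⟩ := hw.succ i
    simp [h, Finset.sum_add_distrib, ih, Finset.sum_pi_single', hγ]

theorem dist_eq (hw : R.IsRayWalk x s f) {i j : ℕ} (hij : i ≤ j) :
    R.dist (R.box (f i)) (R.box (f j)) = j - i := by
  rw [dist_box ⟨_, hw.mem_box i⟩ ⟨_, hw.mem_box j⟩]
  zify [hij]
  rw [← hw.sum_eq j, ← hw.sum_eq i, ← Finset.sum_sub_distrib]
  refine Finset.sum_congr rfl fun α _ => ?_
  rw [abs_of_nonpos (sub_nonpos.2 (hw.monotone α hij)), neg_sub]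

theorem tendsto_atTop (hw : R.IsRayWalk x s f) {α : V} (hα : α ∈ R.pos) :
    Tendsto (fun i => f i α) atTop atTop := by
  set F := R.pos_finite.toFinset
  have hD : 0 < ∑ β ∈ F, ⟪R.ξ, β⟫ :=
    Finset.sum_pos (fun β hβ => (R.pos_finite.mem_toFinset.1 hβ).2) ⟨α, by simpa [F] using hα⟩
  -- Since the labels sum to `i`, the ray has travelled for a time proportional to `i`.
  have hs : ∀ i : ℕ, ((i : ℝ) + -∑ β ∈ F, ⟪x, β⟫) / ∑ β ∈ F, ⟪R.ξ, β⟫ ≤ s i := fun i => by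
    rw [div_le_iff₀ hD, ← sub_eq_add_neg, sub_le_iff_le_add, Finset.mul_sum,
      ← Finset.sum_add_distrib]
    calc (i : ℝ) = ∑ β ∈ F, (f i β : ℝ) := by exact_mod_cast (hw.sum_eq i).symm
      _ ≤ ∑ β ∈ F, (s i * ⟪R.ξ, β⟫ + ⟪x, β⟫) := Finset.sum_le_sum fun β hβ => by
        have := (hw.mem_box i β (R.pos_finite.mem_toFinset.1 hβ)).1
        rw [inner_ray] at this
        linarith
  have hs_top : Tendsto s atTop atTop := tendsto_atTop_mono hs
    ((tendsto_atTop_add_const_right _ _ tendsto_natCast_atTop_atTop).atTop_div_const hD)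
  have hf : (fun i => f i α) = fun i => ⌊⟪x, α⟫ + s i * ⟪R.ξ, α⟫⌋ := funext fun i => by
    rw [← inner_ray, ← floorInner_eq_of_mem_box (hw.mem_box i) hα, floorInner]
  rw [hf]
  exact tendsto_floor_atTop.comp
    (tendsto_atTop_add_const_left _ _ (hs_top.atTop_mul_const hα.2))

end IsRayWalk

theorem lt_dist_of_disjoint_chamber {f : V → ℤ} (hf : (R.box f).Nonempty) {N : ℕ}
    (hN : ∀ α ∈ R.pos, (N : ℤ) ≤ f α) {B : Set V} (hB : R.IsAlcove B)
    (hBC : Disjoint B R.chamber) : N < R.dist (R.box f) B := by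
  obtain ⟨y, hyB, rfl⟩ := hB.exists_eq_box
  have hyC : y ∉ R.chamber := hBC.notMem_of_mem_left hyB
  simp only [chamber, Set.mem_ofPred_eq, not_forall, not_lt] at hyC
  obtain ⟨α, hα, hyα⟩ := hyC
  have hneg : floorInner y α < 0 := by exact_mod_cast (hyB α hα).1.trans_le hyα
  rw [dist_box hf ⟨y, hyB⟩]
  calc N < (f α - floorInner y α).natAbs := by have := hN α hα; omega
    _ ≤ _ := Finset.single_le_sum (f := fun β => (f β - floorInner y β).natAbs)
      (fun _ _ => Nat.zero_le _) (R.pos_finite.mem_toFinset.2 hα)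

end RootSystemData

theorem statement3_general {V : Type*} [NormedAddCommGroup V] [InnerProductSpace ℝ V]
    [FiniteDimensional ℝ V] (R : RootSystemData V) (v : V)
    (u : V ≃ₗᵢ[ℝ] V)
    (hdisj : R.chamber ∩ ((fun x => v + u x) '' R.chamber) = ∅) :
    ∃ A : ℕ → Set V, A 0 = R.baseAlcove ∧
      (∀ i, R.IsAlcove (A i) ∧ A i ⊆ R.chamber) ∧
      (∀ i, R.Adjacent (A i) (A (i + 1))) ∧
      (∀ i j, i ≤ j → R.dist (A i) (A j) = j - i) ∧
      (∀ N : ℕ, ∃ I : ℕ, ∀ i ≥ I, ∀ B : Set V, R.IsAlcove B →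
        B ⊆ (fun x => v + u x) '' R.chamber → N < R.dist (A i) B) := by
  classical
  have := FiniteDimensional.complete ℝ V
  have hP : R.pos.Nonempty := by
    by_contra h
    have hC : R.chamber = Set.univ := by
      ext y
      simp [RootSystemData.chamber, Set.not_nonempty_iff_eq_empty.1 h]
    simp [hC] at hdisj
  obtain ⟨x, hx₀, hx⟩ :=
    R.exists_isGenericRay_mem (R.box_zero ▸ R.isOpen_box 0) R.baseAlcove_nonempty
  obtain ⟨s, f, hw⟩ := R.exists_isRayWalk hP hx hx₀
  have hne : ∀ i, (R.box (f i)).Nonempty := fun i => ⟨_, hw.mem_box i⟩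
  refine ⟨fun i => R.box (f i), show R.box (f 0) = _ by rw [hw.zero, R.box_zero],
    fun i => ⟨R.isAlcove_box (hne i), R.box_subset_chamber fun α _ => hw.nonneg i α⟩,
    fun i => ⟨fun h => ?_, by simpa using hw.dist_eq (Nat.le_succ i)⟩,
    fun i j => hw.dist_eq, fun N => ?_⟩
  · have h1 := hw.dist_eq (Nat.le_succ i)
    rw [show R.box (f i) = R.box (f (i + 1)) from h, hw.dist_eq le_rfl] at h1
    simp at h1
  · obtain ⟨I, hI⟩ := eventually_atTop.1 ((eventually_all_finite R.pos_finite).2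
      fun α hα => (hw.tendsto_atTop hα).eventually_ge_atTop (N : ℤ))
    exact ⟨I, fun i hi B hB hBD => R.lt_dist_of_disjoint_chamber (hne i) (hI i hi) hB
      (Set.disjoint_of_subset_left hBD (Set.disjoint_iff_inter_eq_empty.2 hdisj).symm)⟩

/-- if `v` is special, `u ∈ W₀`, `D = v + u(C)` and `C ∩ D = ∅`, then there is an
infinite minimal gallery starting at the base alcove, staying in `C`, whose distance to the
alcoves contained in `D` tends to infinity. -/
theorem statement3 {V : Type*} [NormedAddCommGroup V] [InnerProductSpace ℝ V]
    [FiniteDimensional ℝ V] (R : RootSystemData V) (v : V) (hv : R.IsSpecial v)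
    (u : V ≃ₗᵢ[ℝ] V) (hu : u ∈ R.W0)
    (hdisj : R.chamber ∩ ((fun x => v + u x) '' R.chamber) = ∅) :
    ∃ A : ℕ → Set V, A 0 = R.baseAlcove ∧
      (∀ i, R.IsAlcove (A i) ∧ A i ⊆ R.chamber) ∧
      (∀ i, R.Adjacent (A i) (A (i + 1))) ∧
      (∀ i j, i ≤ j → R.dist (A i) (A j) = j - i) ∧
      (∀ N : ℕ, ∃ I : ℕ, ∀ i ≥ I, ∀ B : Set V, R.IsAlcove B →
        B ⊆ (fun x => v + u x) '' R.chamber → N < R.dist (A i) B) :=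
  statement3_general R v u hdisj
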